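/- Let n ≥ 1, σ > 0, and let q : (Fin n → ℝ) → ℝ and f : (Fin n → ℝ) → ℝ be twice continuously differentiable. Define L(y, t) = q(y) − (t − f(y))²/(2σ²). Let (Ω, P) be a probability space, let y : Ω → (Fin n → ℝ) be a random vector, and let ε : Ω → ℝ be integrable, independent of y, with E[ε] = 0; set t := f(y) + ε. Assume for all indices i, j that the random variables ∂²_{ij} q(y), (∂_i f(y))·(∂_j f(y)), and ∂²_{ij} f(y) are integrable. Then for all i, j: E[∂²L/∂y_i∂y_j(y, t)] = E[∂²_{ij} q(y)] − σ⁻²·E[(∂_i f(y))·(∂_j f(y))]. -/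

import Mathlib

open Finset MeasureTheory ProbabilityTheory

/-- Partial derivative of `F : (Fin n → ℝ) → ℝ` in the `i`-th coordinate. -/
noncomputable def pdv {n : ℕ} (i : Fin n) (F : (Fin n → ℝ) → ℝ) (v : Fin n → ℝ) : ℝ :=
  deriv (fun t : ℝ => F (Function.update v i t)) (v i)

/-- Partial derivative of `F : (Fin n → ℝ) × ℝ → ℝ` in the `i`-th `y`-coordinate. -/
noncomputable def pdY {n : ℕ} (i : Fin n) (F : (Fin n → ℝ) × ℝ → ℝ)
    (p : (Fin n → ℝ) × ℝ) : ℝ :=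
  deriv (fun s : ℝ => F (Function.update p.1 i s, p.2)) (p.1 i)

/-- fderiv form of the partial derivative. -/
noncomputable def pdvF {n : ℕ} (i : Fin n) (F : (Fin n → ℝ) → ℝ) (v : Fin n → ℝ) : ℝ :=
  fderiv ℝ F v (Pi.single i 1)

lemma hasDerivAt_pdvF {n : ℕ} (i : Fin n) {F : (Fin n → ℝ) → ℝ} {v : Fin n → ℝ}
    (hF : DifferentiableAt ℝ F v) :
    HasDerivAt (fun s => F (Function.update v i s)) (pdvF i F v) (v i) := by
  have h1 := hasDerivAt_update v i (v i)
  have h2 : HasFDerivAt F (fderiv ℝ F v) (Function.update v i (v i)) := by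
    rw [Function.update_eq_self]; exact hF.hasFDerivAt
  exact h2.comp_hasDerivAt (v i) h1

lemma pdv_eq_pdvF {n : ℕ} (i : Fin n) {F : (Fin n → ℝ) → ℝ} {v : Fin n → ℝ}
    (hF : DifferentiableAt ℝ F v) : pdv i F v = pdvF i F v :=
  (hasDerivAt_pdvF i hF).deriv

lemma contDiff_pdvF {n : ℕ} (i : Fin n) {F : (Fin n → ℝ) → ℝ} (hF : ContDiff ℝ 2 F) :
    ContDiff ℝ 1 (pdvF i F) := by
  have h := hF.fderiv_right (m := 1) (by norm_num)
  exact h.clm_apply contDiff_const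

/-- **Marginal SJIM Equivalence (Lemma 3.3, expectation form).**
For `L(y, t) = q(y) − (t − f(y))²/(2σ²)`, a random vector `y`, and zero-mean
integrable noise `ε` independent of `y`, setting `t = f(y) + ε`,
`E[∂²L/∂yᵢ∂yⱼ(y,t)] = E[∂²ᵢⱼq(y)] − σ⁻² E[∂ᵢf(y)·∂ⱼf(y)]`. -/
theorem marginal_sjim_equivalence
    {n : ℕ} (hn : 1 ≤ n) (σ : ℝ) (hσ : 0 < σ)
    (q f : (Fin n → ℝ) → ℝ)
    (hq : ContDiff ℝ 2 q) (hf : ContDiff ℝ 2 f)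
    (L : (Fin n → ℝ) × ℝ → ℝ)
    (hL : L = fun p => q p.1 - (p.2 - f p.1) ^ 2 / (2 * σ ^ 2))
    {Ω : Type*} [MeasurableSpace Ω] (μ : Measure Ω) [IsProbabilityMeasure μ]
    (y : Ω → Fin n → ℝ) (ε : Ω → ℝ)
    (hεint : Integrable ε μ)
    (hεindep : IndepFun ε y μ)
    (hεmean : ∫ ω, ε ω ∂μ = 0)
    (hintq : ∀ i j : Fin n, Integrable (fun ω => pdv i (pdv j q) (y ω)) μ)
    (hintf : ∀ i j : Fin n, Integrable (fun ω => pdv i f (y ω) * pdv j f (y ω)) μ)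
    (hintf2 : ∀ i j : Fin n, Integrable (fun ω => pdv i (pdv j f) (y ω)) μ) :
    ∀ i j : Fin n,
      ∫ ω, pdY i (pdY j L) (y ω, f (y ω) + ε ω) ∂μ
        = (∫ ω, pdv i (pdv j q) (y ω) ∂μ)
          - (σ ^ 2)⁻¹ * ∫ ω, pdv i f (y ω) * pdv j f (y ω) ∂μ := by
  intro i j
  have hσ2 : (σ : ℝ) ^ 2 ≠ 0 := pow_ne_zero 2 hσ.ne'
  have hqd : Differentiable ℝ q := hq.differentiable two_ne_zero
  have hfd : Differentiable ℝ f := hf.differentiable two_ne_zero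
  have hCq : ContDiff ℝ 1 (pdvF j q) := contDiff_pdvF j hq
  have hCf : ContDiff ℝ 1 (pdvF j f) := contDiff_pdvF j hf
  -- Step 1: closed form of the inner partial derivative.
  have hL1 : ∀ (v : Fin n → ℝ) (t : ℝ),
      pdY j L (v, t) = pdvF j q v + (t - f v) * pdvF j f v / σ ^ 2 := by
    intro v t
    have hq' := hasDerivAt_pdvF j (hqd v)
    have hf' := hasDerivAt_pdvF j (hfd v)
    have h2 := (((hasDerivAt_const (v j) t).sub hf').pow 2).div_const (2 * σ ^ 2)
    have key := (hq'.sub h2).deriv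
    simp only [Function.update_eq_self, Pi.add_def, Pi.sub_def, Pi.mul_def, Pi.pow_def] at key
    simp only [pdY, hL]
    rw [key]
    field_simp
    ring
  -- Step 2: closed form of the second partial derivative.
  have hL2 : ∀ (v : Fin n → ℝ) (t : ℝ),
      pdY i (pdY j L) (v, t)
        = pdv i (pdv j q) v
          + ((t - f v) * pdv i (pdv j f) v - pdv i f v * pdv j f v) / σ ^ 2 := by
    intro v t
    have hA := hasDerivAt_pdvF i ((hCq.differentiable one_ne_zero) v)
    have hB := hasDerivAt_pdvF i (hfd v)
    have hD := hasDerivAt_pdvF i ((hCf.differentiable one_ne_zero) v)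
    have key := (hA.add ((((hasDerivAt_const (v i) t).sub hB).mul hD).div_const (σ ^ 2))).deriv
    simp only [Function.update_eq_self, Pi.add_def, Pi.sub_def, Pi.mul_def] at key
    have hfun : (fun s => pdY j L (Function.update v i s, t))
        = fun s => pdvF j q (Function.update v i s)
            + (t - f (Function.update v i s)) * pdvF j f (Function.update v i s) / σ ^ 2 :=
      funext fun s => hL1 _ _
    have hpq : pdv j q = pdvF j q := funext fun w => pdv_eq_pdvF j (hqd w)
    have hpf : pdv j f = pdvF j f := funext fun w => pdv_eq_pdvF j (hfd w)
    have h1 : pdv i (pdv j q) v = pdvF i (pdvF j q) v := by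
      rw [hpq]; exact pdv_eq_pdvF i ((hCq.differentiable one_ne_zero) v)
    have h2 : pdv i (pdv j f) v = pdvF i (pdvF j f) v := by
      rw [hpf]; exact pdv_eq_pdvF i ((hCf.differentiable one_ne_zero) v)
    have h3 : pdv i f v = pdvF i f v := pdv_eq_pdvF i (hfd v)
    have h4 : pdv j f v = pdvF j f v := pdv_eq_pdvF j (hfd v)
    show deriv (fun s => pdY j L (Function.update v i s, t)) (v i) = _
    rw [hfun, key, h1, h2, h3, h4]
    field_simp
    ring
  -- Step 3: the integral computation.
  have hmeas : Measurable (pdv i (pdv j f)) := by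
    have hpf : pdv j f = pdvF j f := funext fun w => pdv_eq_pdvF j (hfd w)
    have : pdv i (pdv j f) = fun v => fderiv ℝ (pdvF j f) v (Pi.single i 1) := by
      rw [hpf]
      exact funext fun v => pdv_eq_pdvF i ((hCf.differentiable one_ne_zero) v)
    rw [this]
    exact ((hCf.continuous_fderiv one_ne_zero).clm_apply continuous_const).measurable
  have hindep : IndepFun ε (fun ω => pdv i (pdv j f) (y ω)) μ :=
    hεindep.comp measurable_id hmeas
  have hεBint : Integrable (fun ω => ε ω * pdv i (pdv j f) (y ω)) μ :=
    hindep.integrable_mul hεint (hintf2 i j)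
  have hεBzero : ∫ ω, ε ω * pdv i (pdv j f) (y ω) ∂μ = 0 := by
    have := hindep.integral_fun_smul_eq_smul_integral hεint.1 (hintf2 i j).1
    simpa [hεmean] using this
  have hrep : (fun ω => pdY i (pdY j L) (y ω, f (y ω) + ε ω))
      = fun ω => pdv i (pdv j q) (y ω)
          + (σ ^ 2)⁻¹ * (ε ω * pdv i (pdv j f) (y ω))
          - (σ ^ 2)⁻¹ * (pdv i f (y ω) * pdv j f (y ω)) := by
    funext ω
    rw [hL2]
    field_simp
    ring
  rw [hrep]
  have h1 : Integrable
      (fun ω => pdv i (pdv j q) (y ω) + (σ ^ 2)⁻¹ * (ε ω * pdv i (pdv j f) (y ω))) μ :=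
    (hintq i j).add (hεBint.const_mul _)
  have h2 : Integrable (fun ω => (σ ^ 2)⁻¹ * (pdv i f (y ω) * pdv j f (y ω))) μ :=
    (hintf i j).const_mul _
  rw [integral_sub h1 h2, integral_add (hintq i j) (hεBint.const_mul _),
    integral_const_mul, integral_const_mul, hεBzero]
  ring
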